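/- Fix N ≥ 1 and λ₁,…,λ_N ∈ ℝ, and let Λ = diag(λ₁,…,λ_N). Let q₁,q₂,q₃,p₁,p₂,p₃ : ℝ² → ℝ^N be smooth functions of (x,t) with ⟨Λq₁,p₃⟩ > 0 everywhere, and suppose that: (i) in x they solve the Hamiltonian system of H⁺ = ⟨q₂,p₁⟩ + ⟨q₃,p₂⟩ + 2⟨Λq₁,p₃⟩^{-1/2}, i.e. ∂_x qᵢ = ∂H⁺/∂pᵢ and ∂_x pᵢ = −∂H⁺/∂qᵢ (i = 1,2,3); and (ii) in t they solve the Hamiltonian system of F₁⁺ = −(1/2)(⟨Λq₁,p₁⟩+⟨Λq₃,p₃⟩)² + 2⟨Λq₂,p₂⟩(⟨Λq₁,p₁⟩+⟨Λq₃,p₃⟩−⟨Λq₂,p₂⟩) + 3(⟨Λq₂,p₃⟩−⟨Λq₁,p₂⟩)(⟨Λq₂,p₁⟩−⟨Λq₃,p₂⟩) − 6⟨Λq₁,p₃⟩⟨Λq₃,p₁⟩ + 6⟨Λq₁,p₃⟩^{-1/2}(⟨Λ²q₁,p₂⟩+⟨Λ²q₂,p₃⟩), i.e. ∂_t qᵢ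 = ∂F₁⁺/∂pᵢ and ∂_t pᵢ = −∂F₁⁺/∂qᵢ (i = 1,2,3). Then the function u(x,t) := ⟨Λq₁(x,t), p₃(x,t)⟩^{-3/2} satisfies the fifth-order equation u_t = ∂⁵_x( u^{-2/3} ). -/

import Mathlib

section Aux

lemma hasDerivAt_update_sum {N : ℕ} (c : Fin N → ℝ) (p : Fin N → ℝ) (j : Fin N) (s : ℝ) :
    HasDerivAt (fun s => ∑ k, c k * Function.update p j s k) (c j) s := by
  have h : (fun s : ℝ => ∑ k, c k * Function.update p j s k)
      = fun s => c j * s + ∑ k ∈ Finset.univ.erase j, c k * p k := by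
    funext s
    rw [← Finset.add_sum_erase _ _ (Finset.mem_univ j), Function.update_self]
    congr 1
    exact Finset.sum_congr rfl fun k hk => by
      rw [Function.update_of_ne (Finset.ne_of_mem_erase hk)]
  rw [h]
  exact (((hasDerivAt_id s).const_mul (c j)).add_const _).congr_deriv (by ring)

lemma hasDerivAt_update_sum' {N : ℕ} (a b p : Fin N → ℝ) (j : Fin N) (s : ℝ) :
    HasDerivAt (fun s => ∑ k, a k * Function.update p j s k * b k) (a j * b j) s := by
  have h : (fun s : ℝ => ∑ k, a k * Function.update p j s k * b k)
      = fun s => ∑ k, (a k * b k) * Function.update p j s k := by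
    funext s; exact Finset.sum_congr rfl fun k _ => by ring
  rw [h]; exact hasDerivAt_update_sum _ _ _ _

lemma hasDerivAt_update_sum'' {N : ℕ} (b p : Fin N → ℝ) (j : Fin N) (s : ℝ) :
    HasDerivAt (fun s => ∑ k, Function.update p j s k * b k) (b j) s := by
  have h : (fun s : ℝ => ∑ k, Function.update p j s k * b k)
      = fun s => ∑ k, b k * Function.update p j s k := by
    funext s; exact Finset.sum_congr rfl fun k _ => by ring
  rw [h]; exact hasDerivAt_update_sum _ _ _ _

/-- `⟨Λa,b⟩`. -/
noncomputable def S1 {N : ℕ} (l a b : Fin N → ℝ) : ℝ := ∑ j, l j * a j * b j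
/-- `⟨Λ²a,b⟩`. -/
noncomputable def S2 {N : ℕ} (l a b : Fin N → ℝ) : ℝ := ∑ j, l j ^ 2 * a j * b j

lemma hasDerivAt_S1 {N : ℕ} (l : Fin N → ℝ) (a b : ℝ → Fin N → ℝ) (a' b' : Fin N → ℝ) (y : ℝ)
    (ha : ∀ j, HasDerivAt (fun y => a y j) (a' j) y)
    (hb : ∀ j, HasDerivAt (fun y => b y j) (b' j) y) :
    HasDerivAt (fun y => S1 l (a y) (b y)) (S1 l a' (b y) + S1 l (a y) b') y := by
  unfold S1
  have h := HasDerivAt.fun_sum (u := Finset.univ)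
    (A := fun j y => l j * a y j * b y j)
    (A' := fun j => (l j * a' j * b y j + l j * a y j * b' j))
    (fun j _ => ((ha j).const_mul (l j)).mul (hb j))
  rw [Finset.sum_add_distrib] at h
  exact h

lemma hasDerivAt_S2 {N : ℕ} (l : Fin N → ℝ) (a b : ℝ → Fin N → ℝ) (a' b' : Fin N → ℝ) (y : ℝ)
    (ha : ∀ j, HasDerivAt (fun y => a y j) (a' j) y)
    (hb : ∀ j, HasDerivAt (fun y => b y j) (b' j) y) :
    HasDerivAt (fun y => S2 l (a y) (b y)) (S2 l a' (b y) + S2 l (a y) b') y := by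
  unfold S2
  have h := HasDerivAt.fun_sum (u := Finset.univ)
    (A := fun j y => l j ^ 2 * a y j * b y j)
    (A' := fun j => (l j ^ 2 * a' j * b y j + l j ^ 2 * a y j * b' j))
    (fun j _ => ((ha j).const_mul (l j ^ 2)).mul (hb j))
  rw [Finset.sum_add_distrib] at h
  exact h

end Aux

/-- The Hamiltonian `H⁺ = ⟨q₂,p₁⟩ + ⟨q₃,p₂⟩ + 2⟨Λq₁,p₃⟩^{-1/2}` on ℝ^{6N}. -/
noncomputable def Hplus (N : ℕ) (l : Fin N → ℝ)
    (q1 q2 q3 p1 p2 p3 : Fin N → ℝ) : ℝ :=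
  (∑ j, q2 j * p1 j) + (∑ j, q3 j * p2 j)
    + 2 * (∑ j, l j * q1 j * p3 j) ^ (-(1:ℝ)/2)

/-- The Hamiltonian `F₁⁺` of the first time flow on ℝ^{6N}. -/
noncomputable def F1plus (N : ℕ) (l : Fin N → ℝ)
    (q1 q2 q3 p1 p2 p3 : Fin N → ℝ) : ℝ :=
  -(1/2) * ((∑ j, l j * q1 j * p1 j) + (∑ j, l j * q3 j * p3 j)) ^ 2
    + 2 * (∑ j, l j * q2 j * p2 j)
      * ((∑ j, l j * q1 j * p1 j) + (∑ j, l j * q3 j * p3 j) - (∑ j, l j * q2 j * p2 j))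
    + 3 * ((∑ j, l j * q2 j * p3 j) - (∑ j, l j * q1 j * p2 j))
      * ((∑ j, l j * q2 j * p1 j) - (∑ j, l j * q3 j * p2 j))
    - 6 * (∑ j, l j * q1 j * p3 j) * (∑ j, l j * q3 j * p1 j)
    + 6 * (∑ j, l j * q1 j * p3 j) ^ (-(1:ℝ)/2)
      * ((∑ j, (l j) ^ 2 * q1 j * p2 j) + (∑ j, (l j) ^ 2 * q2 j * p3 j))

section Partials
variable {N : ℕ} (l q1 q2 q3 p1 p2 p3 : Fin N → ℝ) (j : Fin N)

lemma dHp1 : deriv (fun s => Hplus N l q1 q2 q3 (Function.update p1 j s) p2 p3) (p1 j) = q2 j := by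
  unfold Hplus
  exact (((hasDerivAt_update_sum q2 p1 j (p1 j)).add_const _).add_const _).deriv

lemma dHp2 : deriv (fun s => Hplus N l q1 q2 q3 p1 (Function.update p2 j s) p3) (p2 j) = q3 j := by
  unfold Hplus
  exact (((hasDerivAt_update_sum q3 p2 j (p2 j)).const_add _).add_const _).deriv

lemma dHq2 : deriv (fun s => Hplus N l q1 (Function.update q2 j s) q3 p1 p2 p3) (q2 j) = p1 j := by
  unfold Hplus
  exact (((hasDerivAt_update_sum'' p1 q2 j (q2 j)).add_const _).add_const _).deriv

lemma dHq3 : deriv (fun s => Hplus N l q1 q2 (Function.update q3 j s) p1 p2 p3) (q3 j) = p2 j := by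
  unfold Hplus
  exact (((hasDerivAt_update_sum'' p2 q3 j (q3 j)).const_add _).add_const _).deriv

lemma dHp3 (h : 0 < ∑ k, l k * q1 k * p3 k) :
    deriv (fun s => Hplus N l q1 q2 q3 p1 p2 (Function.update p3 j s)) (p3 j)
      = -((∑ k, l k * q1 k * p3 k) ^ (-(3:ℝ)/2)) * (l j * q1 j) := by
  unfold Hplus
  have hS : HasDerivAt (fun s => ∑ k, l k * q1 k * Function.update p3 j s k)
      (l j * q1 j) (p3 j) := hasDerivAt_update_sum (fun k => l k * q1 k) p3 j (p3 j)
  have hval : (∑ k, l k * q1 k * Function.update p3 j (p3 j) k) = ∑ k, l k * q1 k * p3 k := by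
    rw [Function.update_eq_self]
  have hr := (hS.rpow_const (p := -(1:ℝ)/2) (Or.inl (by rw [hval]; exact ne_of_gt h)))
  have := ((hr.const_mul 2).const_add ((∑ k, q2 k * p1 k) + ∑ k, q3 k * p2 k)).deriv
  rw [this, hval]
  have he : (-(1:ℝ)/2 - 1) = -(3:ℝ)/2 := by norm_num
  rw [he]; ring

lemma dHq1 (h : 0 < ∑ k, l k * q1 k * p3 k) :
    deriv (fun s => Hplus N l (Function.update q1 j s) q2 q3 p1 p2 p3) (q1 j)
      = -((∑ k, l k * q1 k * p3 k) ^ (-(3:ℝ)/2)) * (l j * p3 j) := by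
  unfold Hplus
  have hS : HasDerivAt (fun s => ∑ k, l k * Function.update q1 j s k * p3 k)
      (l j * p3 j) (q1 j) := hasDerivAt_update_sum' l p3 q1 j (q1 j)
  have hval : (∑ k, l k * Function.update q1 j (q1 j) k * p3 k) = ∑ k, l k * q1 k * p3 k := by
    rw [Function.update_eq_self]
  have hr := (hS.rpow_const (p := -(1:ℝ)/2) (Or.inl (by rw [hval]; exact ne_of_gt h)))
  have := ((hr.const_mul 2).const_add ((∑ k, q2 k * p1 k) + ∑ k, q3 k * p2 k)).deriv
  rw [this, hval]
  have he : (-(1:ℝ)/2 - 1) = -(3:ℝ)/2 := by norm_num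
  rw [he]; ring

lemma dFp1 : deriv (fun s => F1plus N l q1 q2 q3 (Function.update p1 j s) p2 p3) (p1 j)
    = -(((∑ k, l k * q1 k * p1 k) + ∑ k, l k * q3 k * p3 k)) * (l j * q1 j)
      + 2 * (∑ k, l k * q2 k * p2 k) * (l j * q1 j)
      + 3 * ((∑ k, l k * q2 k * p3 k) - ∑ k, l k * q1 k * p2 k) * (l j * q2 j)
      - 6 * (∑ k, l k * q1 k * p3 k) * (l j * q3 j) := by
  unfold F1plus
  have h1 : HasDerivAt (fun s => ∑ k, l k * q1 k * Function.update p1 j s k)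
      (l j * q1 j) (p1 j) := hasDerivAt_update_sum (fun k => l k * q1 k) p1 j (p1 j)
  have h2 : HasDerivAt (fun s => ∑ k, l k * q2 k * Function.update p1 j s k)
      (l j * q2 j) (p1 j) := hasDerivAt_update_sum (fun k => l k * q2 k) p1 j (p1 j)
  have h3 : HasDerivAt (fun s => ∑ k, l k * q3 k * Function.update p1 j s k)
      (l j * q3 j) (p1 j) := hasDerivAt_update_sum (fun k => l k * q3 k) p1 j (p1 j)
  have T1 := ((h1.add_const (∑ k, l k * q3 k * p3 k)).fun_pow 2).const_mul (-(1/2) : ℝ)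
  have T2 := ((h1.add_const (∑ k, l k * q3 k * p3 k)).sub_const
      (∑ k, l k * q2 k * p2 k)).const_mul (2 * ∑ k, l k * q2 k * p2 k)
  have T3 := (h2.sub_const (∑ k, l k * q3 k * p2 k)).const_mul
      (3 * ((∑ k, l k * q2 k * p3 k) - ∑ k, l k * q1 k * p2 k))
  have T4 := h3.const_mul (6 * ∑ k, l k * q1 k * p3 k)
  have big := ((((T1.fun_add T2).fun_add T3).fun_sub T4).add_const
      (6 * (∑ k, l k * q1 k * p3 k) ^ (-(1:ℝ)/2)
        * ((∑ k, (l k) ^ 2 * q1 k * p2 k) + (∑ k, (l k) ^ 2 * q2 k * p3 k)))).deriv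
  rw [big, Function.update_eq_self]
  push_cast
  ring

lemma dFq3 : deriv (fun s => F1plus N l q1 q2 (Function.update q3 j s) p1 p2 p3) (q3 j)
    = -(((∑ k, l k * q1 k * p1 k) + ∑ k, l k * q3 k * p3 k)) * (l j * p3 j)
      + 2 * (∑ k, l k * q2 k * p2 k) * (l j * p3 j)
      - 3 * ((∑ k, l k * q2 k * p3 k) - ∑ k, l k * q1 k * p2 k) * (l j * p2 j)
      - 6 * (∑ k, l k * q1 k * p3 k) * (l j * p1 j) := by
  unfold F1plus
  have h1 : HasDerivAt (fun s => ∑ k, l k * Function.update q3 j s k * p3 k)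
      (l j * p3 j) (q3 j) := hasDerivAt_update_sum' l p3 q3 j (q3 j)
  have h2 : HasDerivAt (fun s => ∑ k, l k * Function.update q3 j s k * p2 k)
      (l j * p2 j) (q3 j) := hasDerivAt_update_sum' l p2 q3 j (q3 j)
  have h3 : HasDerivAt (fun s => ∑ k, l k * Function.update q3 j s k * p1 k)
      (l j * p1 j) (q3 j) := hasDerivAt_update_sum' l p1 q3 j (q3 j)
  have T1 := ((h1.const_add (∑ k, l k * q1 k * p1 k)).fun_pow 2).const_mul (-(1/2) : ℝ)
  have T2 := (((h1.const_add (∑ k, l k * q1 k * p1 k)).sub_const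
      (∑ k, l k * q2 k * p2 k)).const_mul (2 * ∑ k, l k * q2 k * p2 k))
  have T3 := (h2.const_sub (∑ k, l k * q2 k * p1 k)).const_mul
      (3 * ((∑ k, l k * q2 k * p3 k) - ∑ k, l k * q1 k * p2 k))
  have T4 := h3.const_mul (6 * ∑ k, l k * q1 k * p3 k)
  have big := ((((T1.fun_add T2).fun_add T3).fun_sub T4).add_const
      (6 * (∑ k, l k * q1 k * p3 k) ^ (-(1:ℝ)/2)
        * ((∑ k, (l k) ^ 2 * q1 k * p2 k) + (∑ k, (l k) ^ 2 * q2 k * p3 k)))).deriv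
  rw [big, Function.update_eq_self]
  push_cast
  ring

end Partials

/-- parametric solution: if `(q(x,t),p(x,t))` solves the Hamiltonian
system of `H⁺` in `x` and that of `F₁⁺` in `t` on the region `⟨Λq₁,p₃⟩ > 0`, then
`u(x,t) := ⟨Λq₁(x,t),p₃(x,t)⟩^{-3/2}` satisfies `u_t = ∂⁵ₓ(u^{-2/3})`. -/
theorem stmt_13 (N : ℕ) (hN : 1 ≤ N) (l : Fin N → ℝ)
    (q1 q2 q3 p1 p2 p3 : ℝ → ℝ → Fin N → ℝ)
    (hpos : ∀ x t, 0 < ∑ j, l j * q1 x t j * p3 x t j)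
    -- (i) the x-evolution is the Hamiltonian flow of H⁺ :
    (hxq1 : ∀ x t j, HasDerivAt (fun y => q1 y t j)
      (deriv (fun s => Hplus N l (q1 x t) (q2 x t) (q3 x t)
        (Function.update (p1 x t) j s) (p2 x t) (p3 x t)) (p1 x t j)) x)
    (hxq2 : ∀ x t j, HasDerivAt (fun y => q2 y t j)
      (deriv (fun s => Hplus N l (q1 x t) (q2 x t) (q3 x t)
        (p1 x t) (Function.update (p2 x t) j s) (p3 x t)) (p2 x t j)) x)
    (hxq3 : ∀ x t j, HasDerivAt (fun y => q3 y t j)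
      (deriv (fun s => Hplus N l (q1 x t) (q2 x t) (q3 x t)
        (p1 x t) (p2 x t) (Function.update (p3 x t) j s)) (p3 x t j)) x)
    (hxp1 : ∀ x t j, HasDerivAt (fun y => p1 y t j)
      (-(deriv (fun s => Hplus N l (Function.update (q1 x t) j s) (q2 x t) (q3 x t)
        (p1 x t) (p2 x t) (p3 x t)) (q1 x t j))) x)
    (hxp2 : ∀ x t j, HasDerivAt (fun y => p2 y t j)
      (-(deriv (fun s => Hplus N l (q1 x t) (Function.update (q2 x t) j s) (q3 x t)
        (p1 x t) (p2 x t) (p3 x t)) (q2 x t j))) x)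
    (hxp3 : ∀ x t j, HasDerivAt (fun y => p3 y t j)
      (-(deriv (fun s => Hplus N l (q1 x t) (q2 x t) (Function.update (q3 x t) j s)
        (p1 x t) (p2 x t) (p3 x t)) (q3 x t j))) x)
    -- (ii) the t-evolution is the Hamiltonian flow of F₁⁺ :
    (htq1 : ∀ x t j, HasDerivAt (fun s => q1 x s j)
      (deriv (fun s => F1plus N l (q1 x t) (q2 x t) (q3 x t)
        (Function.update (p1 x t) j s) (p2 x t) (p3 x t)) (p1 x t j)) t)
    (htq2 : ∀ x t j, HasDerivAt (fun s => q2 x s j)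
      (deriv (fun s => F1plus N l (q1 x t) (q2 x t) (q3 x t)
        (p1 x t) (Function.update (p2 x t) j s) (p3 x t)) (p2 x t j)) t)
    (htq3 : ∀ x t j, HasDerivAt (fun s => q3 x s j)
      (deriv (fun s => F1plus N l (q1 x t) (q2 x t) (q3 x t)
        (p1 x t) (p2 x t) (Function.update (p3 x t) j s)) (p3 x t j)) t)
    (htp1 : ∀ x t j, HasDerivAt (fun s => p1 x s j)
      (-(deriv (fun s => F1plus N l (Function.update (q1 x t) j s) (q2 x t) (q3 x t)
        (p1 x t) (p2 x t) (p3 x t)) (q1 x t j))) t)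
    (htp2 : ∀ x t j, HasDerivAt (fun s => p2 x s j)
      (-(deriv (fun s => F1plus N l (q1 x t) (Function.update (q2 x t) j s) (q3 x t)
        (p1 x t) (p2 x t) (p3 x t)) (q2 x t j))) t)
    (htp3 : ∀ x t j, HasDerivAt (fun s => p3 x s j)
      (-(deriv (fun s => F1plus N l (q1 x t) (q2 x t) (Function.update (q3 x t) j s)
        (p1 x t) (p2 x t) (p3 x t)) (q3 x t j))) t)
    (u : ℝ → ℝ → ℝ)
    (hu : u = fun x t => (∑ j, l j * q1 x t j * p3 x t j) ^ (-(3:ℝ)/2)) :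
    ∀ x t, deriv (fun s => u x s) t
      = iteratedDeriv 5 (fun y => u y t ^ (-(2:ℝ)/3)) x := by
  subst hu
  intro x t
  -- canonical form of the x-flow
  have hq1x : ∀ y s (j : Fin N), HasDerivAt (fun y => q1 y s j) (q2 y s j) y := by
    intro y s j; have h := hxq1 y s j; rwa [dHp1] at h
  have hq2x : ∀ y s (j : Fin N), HasDerivAt (fun y => q2 y s j) (q3 y s j) y := by
    intro y s j; have h := hxq2 y s j; rwa [dHp2] at h
  have hq3x : ∀ y s (j : Fin N), HasDerivAt (fun y => q3 y s j)
      (-((∑ k, l k * q1 y s k * p3 y s k) ^ (-(3:ℝ)/2)) * (l j * q1 y s j)) y := by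
    intro y s j; have h := hxq3 y s j
    rwa [dHp3 l (q1 y s) (q2 y s) (q3 y s) (p1 y s) (p2 y s) (p3 y s) j (hpos y s)] at h
  have hp1x : ∀ y s (j : Fin N), HasDerivAt (fun y => p1 y s j)
      ((∑ k, l k * q1 y s k * p3 y s k) ^ (-(3:ℝ)/2) * (l j * p3 y s j)) y := by
    intro y s j; have h := hxp1 y s j
    rw [dHq1 l (q1 y s) (q2 y s) (q3 y s) (p1 y s) (p2 y s) (p3 y s) j (hpos y s)] at h
    convert h using 1; ring
  have hp2x : ∀ y s (j : Fin N), HasDerivAt (fun y => p2 y s j) (-(p1 y s j)) y := by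
    intro y s j; have h := hxp2 y s j; rwa [dHq2] at h
  have hp3x : ∀ y s (j : Fin N), HasDerivAt (fun y => p3 y s j) (-(p2 y s j)) y := by
    intro y s j; have h := hxp3 y s j; rwa [dHq3] at h
  -- canonical form of the needed pieces of the t-flow (at the point (x,t))
  have hq1t : ∀ j : Fin N, HasDerivAt (fun s => q1 x s j)
      (-(((∑ k, l k * q1 x t k * p1 x t k) + ∑ k, l k * q3 x t k * p3 x t k)) * (l j * q1 x t j)
        + 2 * (∑ k, l k * q2 x t k * p2 x t k) * (l j * q1 x t j)
        + 3 * ((∑ k, l k * q2 x t k * p3 x t k) - ∑ k, l k * q1 x t k * p2 x t k) * (l j * q2 x t j)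
        - 6 * (∑ k, l k * q1 x t k * p3 x t k) * (l j * q3 x t j)) t := by
    intro j; have h := htq1 x t j; rwa [dFp1] at h
  have hp3t : ∀ j : Fin N, HasDerivAt (fun s => p3 x s j)
      (-(-(((∑ k, l k * q1 x t k * p1 x t k) + ∑ k, l k * q3 x t k * p3 x t k)) * (l j * p3 x t j)
        + 2 * (∑ k, l k * q2 x t k * p2 x t k) * (l j * p3 x t j)
        - 3 * ((∑ k, l k * q2 x t k * p3 x t k) - ∑ k, l k * q1 x t k * p2 x t k) * (l j * p2 x t j)
        - 6 * (∑ k, l k * q1 x t k * p3 x t k) * (l j * p1 x t j))) t := by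
    intro j; have h := htp3 x t j; rwa [dFq3] at h
  have hGne : ∀ y, S1 l (q1 y t) (p3 y t) ≠ 0 := fun y => ne_of_gt (hpos y t)
  -- derivatives in x of all the bilinear quantities
  have dA13 : ∀ y, HasDerivAt (fun y => S1 l (q1 y t) (p3 y t))
      (S1 l (q2 y t) (p3 y t) - S1 l (q1 y t) (p2 y t)) y := by
    intro y
    have h := hasDerivAt_S1 l (fun y => q1 y t) (fun y => p3 y t) _ _ y
      (fun j => hq1x y t j) (fun j => hp3x y t j)
    convert h using 1
    simp only [S1, S2, Finset.mul_sum, ← Finset.sum_add_distrib, ← Finset.sum_sub_distrib,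
      ← Finset.sum_neg_distrib]
    exact Finset.sum_congr rfl fun k _ => by ring
  have dA23 : ∀ y, HasDerivAt (fun y => S1 l (q2 y t) (p3 y t))
      (S1 l (q3 y t) (p3 y t) - S1 l (q2 y t) (p2 y t)) y := by
    intro y
    have h := hasDerivAt_S1 l (fun y => q2 y t) (fun y => p3 y t) _ _ y
      (fun j => hq2x y t j) (fun j => hp3x y t j)
    convert h using 1
    simp only [S1, S2, Finset.mul_sum, ← Finset.sum_add_distrib, ← Finset.sum_sub_distrib,
      ← Finset.sum_neg_distrib]
    exact Finset.sum_congr rfl fun k _ => by ring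
  have dA12 : ∀ y, HasDerivAt (fun y => S1 l (q1 y t) (p2 y t))
      (S1 l (q2 y t) (p2 y t) - S1 l (q1 y t) (p1 y t)) y := by
    intro y
    have h := hasDerivAt_S1 l (fun y => q1 y t) (fun y => p2 y t) _ _ y
      (fun j => hq1x y t j) (fun j => hp2x y t j)
    convert h using 1
    simp only [S1, S2, Finset.mul_sum, ← Finset.sum_add_distrib, ← Finset.sum_sub_distrib,
      ← Finset.sum_neg_distrib]
    exact Finset.sum_congr rfl fun k _ => by ring
  have dA33 : ∀ y, HasDerivAt (fun y => S1 l (q3 y t) (p3 y t))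
      (-(S1 l (q1 y t) (p3 y t) ^ (-(3:ℝ)/2)) * S2 l (q1 y t) (p3 y t)
        - S1 l (q3 y t) (p2 y t)) y := by
    intro y
    have h := hasDerivAt_S1 l (fun y => q3 y t) (fun y => p3 y t) _ _ y
      (fun j => hq3x y t j) (fun j => hp3x y t j)
    convert h using 1
    simp only [S1, S2, Finset.mul_sum, ← Finset.sum_add_distrib, ← Finset.sum_sub_distrib,
      ← Finset.sum_neg_distrib]
    exact Finset.sum_congr rfl fun k _ => by ring
  have dA22 : ∀ y, HasDerivAt (fun y => S1 l (q2 y t) (p2 y t))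
      (S1 l (q3 y t) (p2 y t) - S1 l (q2 y t) (p1 y t)) y := by
    intro y
    have h := hasDerivAt_S1 l (fun y => q2 y t) (fun y => p2 y t) _ _ y
      (fun j => hq2x y t j) (fun j => hp2x y t j)
    convert h using 1
    simp only [S1, S2, Finset.mul_sum, ← Finset.sum_add_distrib, ← Finset.sum_sub_distrib,
      ← Finset.sum_neg_distrib]
    exact Finset.sum_congr rfl fun k _ => by ring
  have dA11 : ∀ y, HasDerivAt (fun y => S1 l (q1 y t) (p1 y t))
      (S1 l (q2 y t) (p1 y t)
        + S1 l (q1 y t) (p3 y t) ^ (-(3:ℝ)/2) * S2 l (q1 y t) (p3 y t)) y := by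
    intro y
    have h := hasDerivAt_S1 l (fun y => q1 y t) (fun y => p1 y t) _ _ y
      (fun j => hq1x y t j) (fun j => hp1x y t j)
    convert h using 1
    simp only [S1, S2, Finset.mul_sum, ← Finset.sum_add_distrib, ← Finset.sum_sub_distrib,
      ← Finset.sum_neg_distrib]
    exact Finset.sum_congr rfl fun k _ => by ring
  have dA21 : ∀ y, HasDerivAt (fun y => S1 l (q2 y t) (p1 y t))
      (S1 l (q3 y t) (p1 y t)
        + S1 l (q1 y t) (p3 y t) ^ (-(3:ℝ)/2) * S2 l (q2 y t) (p3 y t)) y := by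
    intro y
    have h := hasDerivAt_S1 l (fun y => q2 y t) (fun y => p1 y t) _ _ y
      (fun j => hq2x y t j) (fun j => hp1x y t j)
    convert h using 1
    simp only [S1, S2, Finset.mul_sum, ← Finset.sum_add_distrib, ← Finset.sum_sub_distrib,
      ← Finset.sum_neg_distrib]
    exact Finset.sum_congr rfl fun k _ => by ring
  have dA32 : ∀ y, HasDerivAt (fun y => S1 l (q3 y t) (p2 y t))
      (-(S1 l (q1 y t) (p3 y t) ^ (-(3:ℝ)/2)) * S2 l (q1 y t) (p2 y t)
        - S1 l (q3 y t) (p1 y t)) y := by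
    intro y
    have h := hasDerivAt_S1 l (fun y => q3 y t) (fun y => p2 y t) _ _ y
      (fun j => hq3x y t j) (fun j => hp2x y t j)
    convert h using 1
    simp only [S1, S2, Finset.mul_sum, ← Finset.sum_add_distrib, ← Finset.sum_sub_distrib,
      ← Finset.sum_neg_distrib]
    exact Finset.sum_congr rfl fun k _ => by ring
  have dA31 : ∀ y, HasDerivAt (fun y => S1 l (q3 y t) (p1 y t))
      (-(S1 l (q1 y t) (p3 y t) ^ (-(3:ℝ)/2)) * S2 l (q1 y t) (p1 y t)
        + S1 l (q1 y t) (p3 y t) ^ (-(3:ℝ)/2) * S2 l (q3 y t) (p3 y t)) y := by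
    intro y
    have h := hasDerivAt_S1 l (fun y => q3 y t) (fun y => p1 y t) _ _ y
      (fun j => hq3x y t j) (fun j => hp1x y t j)
    convert h using 1
    simp only [S1, S2, Finset.mul_sum, ← Finset.sum_add_distrib, ← Finset.sum_sub_distrib,
      ← Finset.sum_neg_distrib]
    exact Finset.sum_congr rfl fun k _ => by ring
  have dB23 : ∀ y, HasDerivAt (fun y => S2 l (q2 y t) (p3 y t))
      (S2 l (q3 y t) (p3 y t) - S2 l (q2 y t) (p2 y t)) y := by
    intro y
    have h := hasDerivAt_S2 l (fun y => q2 y t) (fun y => p3 y t) _ _ y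
      (fun j => hq2x y t j) (fun j => hp3x y t j)
    convert h using 1
    simp only [S1, S2, Finset.mul_sum, ← Finset.sum_add_distrib, ← Finset.sum_sub_distrib,
      ← Finset.sum_neg_distrib]
    exact Finset.sum_congr rfl fun k _ => by ring
  have dB12 : ∀ y, HasDerivAt (fun y => S2 l (q1 y t) (p2 y t))
      (S2 l (q2 y t) (p2 y t) - S2 l (q1 y t) (p1 y t)) y := by
    intro y
    have h := hasDerivAt_S2 l (fun y => q1 y t) (fun y => p2 y t) _ _ y
      (fun j => hq1x y t j) (fun j => hp2x y t j)
    convert h using 1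
    simp only [S1, S2, Finset.mul_sum, ← Finset.sum_add_distrib, ← Finset.sum_sub_distrib,
      ← Finset.sum_neg_distrib]
    exact Finset.sum_congr rfl fun k _ => by ring
  -- the chain of x-derivatives of g = ⟨Λq₁,p₃⟩
  have hG1 : ∀ y, HasDerivAt
      (fun y => S1 l (q2 y t) (p3 y t) - S1 l (q1 y t) (p2 y t))
      (S1 l (q3 y t) (p3 y t) - 2 * S1 l (q2 y t) (p2 y t) + S1 l (q1 y t) (p1 y t)) y := by
    intro y
    have h := (dA23 y).fun_sub (dA12 y)
    exact h.congr_deriv (by ring)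
  have hG2 : ∀ y, HasDerivAt
      (fun y => S1 l (q3 y t) (p3 y t) - 2 * S1 l (q2 y t) (p2 y t) + S1 l (q1 y t) (p1 y t))
      (3 * (S1 l (q2 y t) (p1 y t) - S1 l (q3 y t) (p2 y t))) y := by
    intro y
    have h := ((dA33 y).fun_sub ((dA22 y).const_mul 2)).fun_add (dA11 y)
    exact h.congr_deriv (by ring)
  have hG3 : ∀ y, HasDerivAt
      (fun y => 3 * (S1 l (q2 y t) (p1 y t) - S1 l (q3 y t) (p2 y t)))
      (6 * S1 l (q3 y t) (p1 y t)
        + 3 * S1 l (q1 y t) (p3 y t) ^ (-(3:ℝ)/2)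
          * (S2 l (q2 y t) (p3 y t) + S2 l (q1 y t) (p2 y t))) y := by
    intro y
    have h := ((dA21 y).fun_sub (dA32 y)).const_mul 3
    exact h.congr_deriv (by ring)
  have hG4 : ∀ y, HasDerivAt
      (fun y => 6 * S1 l (q3 y t) (p1 y t)
        + 3 * S1 l (q1 y t) (p3 y t) ^ (-(3:ℝ)/2)
          * (S2 l (q2 y t) (p3 y t) + S2 l (q1 y t) (p2 y t)))
      (9 * S1 l (q1 y t) (p3 y t) ^ (-(3:ℝ)/2)
          * (S2 l (q3 y t) (p3 y t) - S2 l (q1 y t) (p1 y t))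
        - (9/2) * S1 l (q1 y t) (p3 y t) ^ (-(5:ℝ)/2)
          * (S1 l (q2 y t) (p3 y t) - S1 l (q1 y t) (p2 y t))
          * (S2 l (q2 y t) (p3 y t) + S2 l (q1 y t) (p2 y t))) y := by
    intro y
    have hX := (dA13 y).rpow_const (p := -(3:ℝ)/2) (Or.inl (hGne y))
    have h := ((dA31 y).const_mul 6).fun_add ((hX.const_mul 3).fun_mul ((dB23 y).fun_add (dB12 y)))
    refine h.congr_deriv ?_
    rw [show (-(3:ℝ)/2 - 1) = -(5:ℝ)/2 by norm_num]
    ring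
  -- the five x-derivatives as function identities
  have e0 : deriv (fun y => S1 l (q1 y t) (p3 y t))
      = fun y => S1 l (q2 y t) (p3 y t) - S1 l (q1 y t) (p2 y t) :=
    funext fun y => (dA13 y).deriv
  have e1 : deriv (fun y => S1 l (q2 y t) (p3 y t) - S1 l (q1 y t) (p2 y t))
      = fun y => S1 l (q3 y t) (p3 y t) - 2 * S1 l (q2 y t) (p2 y t) + S1 l (q1 y t) (p1 y t) :=
    funext fun y => (hG1 y).deriv
  have e2 : deriv (fun y => S1 l (q3 y t) (p3 y t) - 2 * S1 l (q2 y t) (p2 y t)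
        + S1 l (q1 y t) (p1 y t))
      = fun y => 3 * (S1 l (q2 y t) (p1 y t) - S1 l (q3 y t) (p2 y t)) :=
    funext fun y => (hG2 y).deriv
  have e3 : deriv (fun y => 3 * (S1 l (q2 y t) (p1 y t) - S1 l (q3 y t) (p2 y t)))
      = fun y => 6 * S1 l (q3 y t) (p1 y t)
        + 3 * S1 l (q1 y t) (p3 y t) ^ (-(3:ℝ)/2)
          * (S2 l (q2 y t) (p3 y t) + S2 l (q1 y t) (p2 y t)) :=
    funext fun y => (hG3 y).deriv
  have e4 : deriv (fun y => 6 * S1 l (q3 y t) (p1 y t)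
        + 3 * S1 l (q1 y t) (p3 y t) ^ (-(3:ℝ)/2)
          * (S2 l (q2 y t) (p3 y t) + S2 l (q1 y t) (p2 y t)))
      = fun y => 9 * S1 l (q1 y t) (p3 y t) ^ (-(3:ℝ)/2)
          * (S2 l (q3 y t) (p3 y t) - S2 l (q1 y t) (p1 y t))
        - (9/2) * S1 l (q1 y t) (p3 y t) ^ (-(5:ℝ)/2)
          * (S1 l (q2 y t) (p3 y t) - S1 l (q1 y t) (p2 y t))
          * (S2 l (q2 y t) (p3 y t) + S2 l (q1 y t) (p2 y t)) :=
    funext fun y => (hG4 y).deriv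
  -- the t-derivative of g
  have hGt : HasDerivAt (fun s => S1 l (q1 x s) (p3 x s))
      (3 * (S1 l (q2 x t) (p3 x t) - S1 l (q1 x t) (p2 x t))
          * (S2 l (q2 x t) (p3 x t) + S2 l (q1 x t) (p2 x t))
        - 6 * S1 l (q1 x t) (p3 x t)
          * (S2 l (q3 x t) (p3 x t) - S2 l (q1 x t) (p1 x t))) t := by
    have h := hasDerivAt_S1 l (fun s => q1 x s) (fun s => p3 x s) _ _ t
      (fun j => hq1t j) (fun j => hp3t j)
    convert h using 1
    simp only [S1, S2, Finset.mul_sum, ← Finset.sum_add_distrib, ← Finset.sum_sub_distrib,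
      ← Finset.sum_neg_distrib]
    exact Finset.sum_congr rfl fun k _ => by ring
  -- now put everything together
  show deriv (fun s => S1 l (q1 x s) (p3 x s) ^ (-(3:ℝ)/2)) t
    = iteratedDeriv 5 (fun y => (S1 l (q1 y t) (p3 y t) ^ (-(3:ℝ)/2)) ^ (-(2:ℝ)/3)) x
  have hfun : (fun y => (S1 l (q1 y t) (p3 y t) ^ (-(3:ℝ)/2)) ^ (-(2:ℝ)/3))
      = fun y => S1 l (q1 y t) (p3 y t) := by
    funext y
    rw [← Real.rpow_mul (x := S1 l (q1 y t) (p3 y t)) (le_of_lt (hpos y t)),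
      show (-(3:ℝ)/2 * (-(2:ℝ)/3)) = 1 by norm_num, Real.rpow_one]
  rw [hfun, show (5:ℕ) = 4 + 1 by norm_num, iteratedDeriv_succ', e0,
    show (4:ℕ) = 3 + 1 by norm_num, iteratedDeriv_succ', e1,
    show (3:ℕ) = 2 + 1 by norm_num, iteratedDeriv_succ', e2,
    iteratedDeriv_succ' (n := 1), e3,
    iteratedDeriv_one, e4]
  rw [(hGt.rpow_const (p := -(3:ℝ)/2) (Or.inl (hGne x))).deriv,
    show (-(3:ℝ)/2 - 1) = -(5:ℝ)/2 by norm_num]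
  have hGG : S1 l (q1 x t) (p3 x t) ^ (-(5:ℝ)/2) * S1 l (q1 x t) (p3 x t)
      = S1 l (q1 x t) (p3 x t) ^ (-(3:ℝ)/2) := by
    rw [← Real.rpow_add_one (hGne x), show (-(5:ℝ)/2 + 1) = -(3:ℝ)/2 by norm_num]
  linear_combination (9 * (S2 l (q3 x t) (p3 x t) - S2 l (q1 x t) (p1 x t))) * hGG
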